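/- Let N ≥ 1, let S₁, S₂ be symmetric real N×N matrices, let M be a symmetric positive definite real N×N matrix, let τ₁ > 0, Δt > 0, F : ℝᴺ × ℝᴺ → ℝ continuously differentiable, and fix η ∈ ℝᴺ. Suppose u, u⁺ ∈ ℝᴺ satisfy the AVF step for the u-equation with v frozen at η: τ₁ M (u⁺ - u) = Δt [ -S₁ (u⁺ + u)/2 + ∫₀¹ ∇_u F((1-ξ)u + ξ u⁺, η) dξ ]. Then, with E(u,v) = ½ uᵀS₁u - ½ vᵀS₂v - F(u,v), one has E(u⁺, η) - E(u, η) = -(τ₁/Δt)(u⁺-u)ᵀM(u⁺-u) ≤ 0; in particular E(u⁺, η) ≤ E(u, η). -/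

import Mathlib

/-!
The AVF average `ḡ = ∫₀¹ ∇_u F((1-ξ)u + ξu⁺, η) dξ` is a discrete gradient of `F(·, η)`: by the
fundamental theorem of calculus along the segment from `u` to `u⁺`,
`(u⁺ - u) ⬝ ḡ = F(u⁺, η) - F(u, η)`. Dotting the step with `u⁺ - u` and using the symmetry of `S₁`
in `(u⁺ - u)ᵀS₁(u⁺ + u) = u⁺ᵀS₁u⁺ - uᵀS₁u` turns it into an exact energy balance, whose
right-hand side `-(τ₁/Δt)(u⁺ - u)ᵀM(u⁺ - u)` is nonpositive because `M` is positive definite.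
-/

open Matrix

open AffineMap in
theorem intervalIntegral_fderiv_lineMap {E F : Type*} [NormedAddCommGroup E] [NormedSpace ℝ E]
    [NormedAddCommGroup F] [NormedSpace ℝ F] [CompleteSpace F] {f : E → F}
    (hf : ContDiff ℝ 1 f) (a b : E) :
    ∫ t in (0:ℝ)..1, fderiv ℝ f (lineMap a b t) (b - a) = f b - f a := by
  have hderiv (t : ℝ) :
      HasDerivAt (fun s => f (lineMap a b s)) (fderiv ℝ f (lineMap a b t) (b - a)) t :=
    (hf.differentiable one_ne_zero _).hasFDerivAt.comp_hasDerivAt t (hasDerivAt_lineMap ..)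
  have hcont : Continuous fun t : ℝ => fderiv ℝ f (lineMap a b t) (b - a) :=
    ((hf.continuous_fderiv one_ne_zero).comp lineMap_continuous).clm_apply
      continuous_const
  rw [intervalIntegral.integral_eq_sub_of_hasDerivAt (fun t _ => hderiv t)
    (hcont.intervalIntegrable 0 1), lineMap_apply_one, lineMap_apply_zero]

theorem Matrix.dotProduct_intervalIntegral {ι : Type*} [Fintype ι] {f : ℝ → ι → ℝ} {a b : ℝ}
    (hf : IntervalIntegrable f MeasureTheory.volume a b) (w : ι → ℝ) :
    w ⬝ᵥ ∫ t in a..b, f t = ∫ t in a..b, w ⬝ᵥ f t :=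
  ((dotProductBilin ℝ ℝ w).toContinuousLinearMap.intervalIntegral_comp_comm hf).symm

theorem continuous_of_forall_clm_apply_eq_dotProduct {X ι : Type*} [TopologicalSpace X]
    [Fintype ι] {L : X → (ι → ℝ) →L[ℝ] ℝ} {g : X → ι → ℝ}
    (hL : Continuous L) (hg : ∀ x w, L x w = g x ⬝ᵥ w) : Continuous g := by
  classical
  refine continuous_pi fun i => ?_
  have hcoord : (fun x => g x i) = fun x => L x (Pi.single i 1) := by
    funext x; rw [hg, dotProduct_single, mul_one]
  rw [hcoord]
  exact hL.clm_apply continuous_const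

theorem Matrix.IsSymm.sub_dotProduct_mulVec_add {ι : Type*} [Fintype ι]
    {S : Matrix ι ι ℝ} (hS : S.IsSymm) (x y : ι → ℝ) :
    (y - x) ⬝ᵥ S *ᵥ (y + x) = y ⬝ᵥ S *ᵥ y - x ⬝ᵥ S *ᵥ x := by
  have hcross : x ⬝ᵥ S *ᵥ y = y ⬝ᵥ S *ᵥ x := by
    rw [dotProduct_mulVec, ← mulVec_transpose, hS.eq, dotProduct_comm]
  simp only [sub_dotProduct, mulVec_add, dotProduct_add]
  linear_combination -hcross

theorem Matrix.IsSymm.energy_sub_eq_of_discrete_gradient_step {ι : Type*} [Fintype ι]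
    {S M : Matrix ι ι ℝ} (hS : S.IsSymm) {τ Δt Φ Φ' : ℝ} (hΔt : Δt ≠ 0) {u u' g : ι → ℝ}
    (hstep : τ • M *ᵥ (u' - u) = Δt • (-((1/2 : ℝ) • S *ᵥ (u' + u)) + g))
    (hg : (u' - u) ⬝ᵥ g = Φ' - Φ) :
    (1/2) * (u' ⬝ᵥ S *ᵥ u') - Φ' - ((1/2) * (u ⬝ᵥ S *ᵥ u) - Φ) =
      -(τ / Δt) * ((u' - u) ⬝ᵥ M *ᵥ (u' - u)) := by
  have key := congrArg ((u' - u) ⬝ᵥ ·) hstep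
  simp only [dotProduct_smul, dotProduct_add, dotProduct_neg, smul_eq_mul, hg,
    hS.sub_dotProduct_mulVec_add] at key
  field_simp
  linear_combination 2 * key

open AffineMap in
theorem sub_dotProduct_avf_partialGradient {ι V : Type*} [Fintype ι]
    [NormedAddCommGroup V] [NormedSpace ℝ V] {F : (ι → ℝ) × V → ℝ} (hF : ContDiff ℝ 1 F)
    {Fu : (ι → ℝ) × V → ι → ℝ} (hFu : ∀ p w, fderiv ℝ F p (w, 0) = Fu p ⬝ᵥ w) (η : V)
    (u u' : ι → ℝ) :
    (u' - u) ⬝ᵥ ∫ ξ in (0:ℝ)..1, Fu ((1 - ξ) • u + ξ • u', η) = F (u', η) - F (u, η) := by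
  have hline (ξ : ℝ) : lineMap (u, η) (u', η) ξ = ((1 - ξ) • u + ξ • u', η) := by
    rw [lineMap_apply_module, Prod.smul_mk, Prod.smul_mk, Prod.mk_add_mk, ← add_smul,
      sub_add_cancel, one_smul]
  have hFu_cont : Continuous Fu :=
    continuous_of_forall_clm_apply_eq_dotProduct
      (L := fun p => (fderiv ℝ F p).comp (.inl ℝ _ _))
      ((hF.continuous_fderiv one_ne_zero).clm_comp continuous_const) hFu
  have hFu_segment : Continuous fun ξ : ℝ => Fu ((1 - ξ) • u + ξ • u', η) := by fun_prop
  rw [dotProduct_intervalIntegral (hFu_segment.intervalIntegrable 0 1),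
    ← intervalIntegral_fderiv_lineMap hF]
  congr 1 with ξ
  rw [hline, Prod.mk_sub_mk, sub_self, hFu, dotProduct_comm]

theorem avf_frozen_v_energy_decrease_general (N : ℕ)
    (S₁ S₂ M : Matrix (Fin N) (Fin N) ℝ)
    (hS₁ : S₁.IsSymm) (hM : M.PosDef)
    (τ₁ Δt : ℝ) (hτ₁ : 0 < τ₁) (hΔt : 0 < Δt)
    (F : (Fin N → ℝ) × (Fin N → ℝ) → ℝ) (hF : ContDiff ℝ 1 F)
    -- `Fu p` is the partial gradient `∇_u F` at `p`
    (Fu : (Fin N → ℝ) × (Fin N → ℝ) → (Fin N → ℝ))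
    (hFu : ∀ p : (Fin N → ℝ) × (Fin N → ℝ), ∀ w : Fin N → ℝ,
      fderiv ℝ F p (w, 0) = Fu p ⬝ᵥ w)
    (η u u' : Fin N → ℝ)
    -- the AVF step for the u-equation with v frozen at η
    (havfu : τ₁ • M.mulVec (u' - u) =
      Δt • (-((1/2 : ℝ) • S₁.mulVec (u' + u)) +
        ∫ ξ in (0:ℝ)..1, Fu ((1 - ξ) • u + ξ • u', η))) :
    ((1/2) * (u' ⬝ᵥ S₁.mulVec u') - (1/2) * (η ⬝ᵥ S₂.mulVec η) - F (u', η)) -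
    ((1/2) * (u ⬝ᵥ S₁.mulVec u) - (1/2) * (η ⬝ᵥ S₂.mulVec η) - F (u, η)) =
      -(τ₁ / Δt) * ((u' - u) ⬝ᵥ M.mulVec (u' - u)) ∧
    -(τ₁ / Δt) * ((u' - u) ⬝ᵥ M.mulVec (u' - u)) ≤ 0 ∧
    (1/2) * (u' ⬝ᵥ S₁.mulVec u') - (1/2) * (η ⬝ᵥ S₂.mulVec η) - F (u', η) ≤
      (1/2) * (u ⬝ᵥ S₁.mulVec u) - (1/2) * (η ⬝ᵥ S₂.mulVec η) - F (u, η) := by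
  have henergy := hS₁.energy_sub_eq_of_discrete_gradient_step hΔt.ne' havfu
    (sub_dotProduct_avf_partialGradient hF hFu η u u')
  have hdissipation : -(τ₁ / Δt) * ((u' - u) ⬝ᵥ M *ᵥ (u' - u)) ≤ 0 := by
    have hq := hM.posSemidef.dotProduct_mulVec_nonneg (u' - u)
    rw [star_trivial] at hq
    exact mul_nonpos_of_nonpos_of_nonneg (neg_nonpos.mpr (div_pos hτ₁ hΔt).le) hq
  exact ⟨by linarith, hdissipation, by linarith⟩

/-- With the second component frozen at `η`, one AVF step for the `u`-equation of a
semi-discretized skew-gradient system dissipates the energy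
`E(u,v) = ½uᵀS₁u - ½vᵀS₂v - F(u,v)`:
`E(u⁺,η) - E(u,η) = -(τ₁/Δt)(u⁺-u)ᵀM(u⁺-u) ≤ 0`. -/
theorem avf_frozen_v_energy_decrease (N : ℕ) (hN : 1 ≤ N)
    (S₁ S₂ M : Matrix (Fin N) (Fin N) ℝ)
    (hS₁ : S₁.IsSymm) (hS₂ : S₂.IsSymm) (hMsym : M.IsSymm) (hM : M.PosDef)
    (τ₁ Δt : ℝ) (hτ₁ : 0 < τ₁) (hΔt : 0 < Δt)
    (F : (Fin N → ℝ) × (Fin N → ℝ) → ℝ) (hF : ContDiff ℝ 1 F)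
    -- `Fu p` is the partial gradient `∇_u F` at `p`
    (Fu : (Fin N → ℝ) × (Fin N → ℝ) → (Fin N → ℝ))
    (hFu : ∀ p : (Fin N → ℝ) × (Fin N → ℝ), ∀ w : Fin N → ℝ,
      fderiv ℝ F p (w, 0) = Fu p ⬝ᵥ w)
    (η u u' : Fin N → ℝ)
    -- the AVF step for the u-equation with v frozen at η
    (havfu : τ₁ • M.mulVec (u' - u) =
      Δt • (-((1/2 : ℝ) • S₁.mulVec (u' + u)) +
        ∫ ξ in (0:ℝ)..1, Fu ((1 - ξ) • u + ξ • u', η))) :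
    ((1/2) * (u' ⬝ᵥ S₁.mulVec u') - (1/2) * (η ⬝ᵥ S₂.mulVec η) - F (u', η)) -
    ((1/2) * (u ⬝ᵥ S₁.mulVec u) - (1/2) * (η ⬝ᵥ S₂.mulVec η) - F (u, η)) =
      -(τ₁ / Δt) * ((u' - u) ⬝ᵥ M.mulVec (u' - u)) ∧
    -(τ₁ / Δt) * ((u' - u) ⬝ᵥ M.mulVec (u' - u)) ≤ 0 ∧
    (1/2) * (u' ⬝ᵥ S₁.mulVec u') - (1/2) * (η ⬝ᵥ S₂.mulVec η) - F (u', η) ≤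
      (1/2) * (u ⬝ᵥ S₁.mulVec u) - (1/2) * (η ⬝ᵥ S₂.mulVec η) - F (u, η) :=
  avf_frozen_v_energy_decrease_general N S₁ S₂ M hS₁ hM τ₁ Δt hτ₁ hΔt F hF Fu hFu η u u' havfu
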